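/- If I and J are common intervals of a permutation σ and I ∩ J ≠ ∅, then I ∪ J and I ∩ J are common intervals of σ. -/
import Mathlib


/-- `I` is a common interval of `σ`: an interval of indices whose image under `σ`
is an interval of values. -/
def IsCommonInterval {n : ℕ} (σ : Equiv.Perm (Fin n)) (I : Finset (Fin n)) : Prop :=
  (∃ j k : Fin n, j ≤ k ∧ I = Finset.Icc j k) ∧
  (∃ a b : Fin n, I.image ⇑σ = Finset.Icc a b)

lemma mem_union_Icc_iff {α : Type*} [LinearOrder α] {a b c d x y : α}
    (hx1 : a ≤ x) (hx2 : x ≤ b) (hx3 : c ≤ x) (hx4 : x ≤ d) :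
    ((a ≤ y ∧ y ≤ b) ∨ (c ≤ y ∧ y ≤ d)) ↔ (min a c ≤ y ∧ y ≤ max b d) := by
  constructor
  · rintro (⟨h1, h2⟩ | ⟨h1, h2⟩)
    · exact ⟨le_trans (min_le_left _ _) h1, le_trans h2 (le_max_left _ _)⟩
    · exact ⟨le_trans (min_le_right _ _) h1, le_trans h2 (le_max_right _ _)⟩
  · rintro ⟨h1, h2⟩
    rcases le_total y x with h | h
    · rcases min_le_iff.mp h1 with ha | hc
      · exact Or.inl ⟨ha, h.trans hx2⟩
      · exact Or.inr ⟨hc, h.trans hx4⟩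
    · rcases le_max_iff.mp h2 with hb | hd
      · exact Or.inl ⟨hx1.trans h, hb⟩
      · exact Or.inr ⟨hx3.trans h, hd⟩

lemma mem_inter_Icc_iff {α : Type*} [LinearOrder α] {a b c d y : α} :
    ((a ≤ y ∧ y ≤ b) ∧ (c ≤ y ∧ y ≤ d)) ↔ (max a c ≤ y ∧ y ≤ min b d) := by
  constructor
  · rintro ⟨⟨h1, h2⟩, h3, h4⟩
    exact ⟨max_le h1 h3, le_min h2 h4⟩
  · rintro ⟨h1, h2⟩
    exact ⟨⟨le_trans (le_max_left _ _) h1, le_trans h2 (min_le_left _ _)⟩,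
      le_trans (le_max_right _ _) h1, le_trans h2 (min_le_right _ _)⟩

theorem commonInterval_union_inter {n : ℕ} (σ : Equiv.Perm (Fin n)) (I J : Finset (Fin n))
    (hI : IsCommonInterval σ I) (hJ : IsCommonInterval σ J) (hIJ : (I ∩ J).Nonempty) :
    IsCommonInterval σ (I ∪ J) ∧ IsCommonInterval σ (I ∩ J) := by
  obtain ⟨⟨j, k, hjk, hIe⟩, ⟨a, b, hIim⟩⟩ := hI
  obtain ⟨⟨j', k', hjk', hJe⟩, ⟨a', b', hJim⟩⟩ := hJ
  have himg_inter : (I ∩ J).image ⇑σ = I.image ⇑σ ∩ J.image ⇑σ :=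
    Finset.image_inter _ _ σ.injective
  have himg_union : (I ∪ J).image ⇑σ = I.image ⇑σ ∪ J.image ⇑σ := Finset.image_union _ _
  have hidx : (I ∩ J).Nonempty := hIJ
  obtain ⟨x, hx⟩ := hIJ
  have hx' := hx
  rw [hIe, hJe, Finset.mem_inter, Finset.mem_Icc, Finset.mem_Icc] at hx
  obtain ⟨z, hz⟩ : (I.image ⇑σ ∩ J.image ⇑σ).Nonempty := by
    rw [← himg_inter]; exact hidx.image _
  rw [hIim, hJim, Finset.mem_inter, Finset.mem_Icc, Finset.mem_Icc] at hz
  constructor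
  · constructor
    · refine ⟨min j j', max k k', ?_, ?_⟩
      · exact le_trans (le_trans (min_le_left _ _) hx.1.1) (le_trans hx.1.2 (le_max_left _ _))
      · rw [hIe, hJe]
        ext y
        simp only [Finset.mem_union, Finset.mem_Icc]
        exact mem_union_Icc_iff hx.1.1 hx.1.2 hx.2.1 hx.2.2
    · refine ⟨min a a', max b b', ?_⟩
      rw [himg_union, hIim, hJim]
      ext y
      simp only [Finset.mem_union, Finset.mem_Icc]
      exact mem_union_Icc_iff hz.1.1 hz.1.2 hz.2.1 hz.2.2
  · constructor
    · refine ⟨max j j', min k k', ?_, ?_⟩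
      · exact le_trans (max_le hx.1.1 hx.2.1) (le_min hx.1.2 hx.2.2)
      · rw [hIe, hJe]
        ext y
        simp only [Finset.mem_inter, Finset.mem_Icc]
        exact mem_inter_Icc_iff
    · refine ⟨max a a', min b b', ?_⟩
      rw [himg_inter, hIim, hJim]
      ext y
      simp only [Finset.mem_inter, Finset.mem_Icc]
      exact mem_inter_Icc_iff
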